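/- arXiv:1504.04261 — 10 statements merged into one kernel-verified Lean document; each statement's English description precedes it below -/
import Mathlib

section
/- In any group G, if w = w1 * a⁻¹ * w2 * b⁻¹ * w3 * a * w4 * b * w5 and w1*w4*w3*w2*w5 = 1, then w is a commutator; explicitly, w = (w1*w4) * [w3*a*w4, b*w2⁻¹*w3⁻¹] * (w1*w4)⁻¹. -/
theorem stmt_1 {G : Type*} [Group G] (w w1 w2 w3 w4 w5 a b : G)
    (h : w = w1 * a⁻¹ * w2 * b⁻¹ * w3 * a * w4 * b * w5)
    (h1 : w1 * w4 * w3 * w2 * w5 = 1) :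
    (∃ u v : G, w = u⁻¹ * v⁻¹ * u * v) ∧
      w = (w1*w4) * ((w3*a*w4)⁻¹ * (b*w2⁻¹*w3⁻¹)⁻¹ * (w3*a*w4) * (b*w2⁻¹*w3⁻¹)) * (w1*w4)⁻¹ := by
  have hw5 : w5 = (w1 * w4 * w3 * w2)⁻¹ :=
    eq_inv_of_mul_eq_one_right (by simpa only [mul_assoc] using h1)
  have hconj : w = (w1*w4) * ((w3*a*w4)⁻¹ * (b*w2⁻¹*w3⁻¹)⁻¹ * (w3*a*w4) * (b*w2⁻¹*w3⁻¹))
      * (w1*w4)⁻¹ := by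
    rw [h, hw5]
    group
  -- a conjugate of a commutator is the commutator of the conjugates
  set g := w1 * w4
  refine ⟨⟨g * (w3*a*w4) * g⁻¹, g * (b*w2⁻¹*w3⁻¹) * g⁻¹, hconj.trans (by group)⟩, hconj⟩
end

section
/- In any group G, the commutator length of [x,y]³ is at most 2, i.e. [x,y]³ can be written as a product of two commutators; for example [x,y]³ = [x⁻¹yx, x⁻²yxy⁻¹]*[yxy⁻¹, y²]. -/
/-- The commutator `[a,b] = a⁻¹b⁻¹ab`. -/
def commF {G : Type*} [Group G] (a b : G) : G := a⁻¹ * b⁻¹ * a * b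

/-- `g` is a product of `n` commutators. -/
def IsProdOfCommutators {G : Type*} [Group G] (g : G) (n : ℕ) : Prop :=
  ∃ a b : Fin n → G, g = (List.ofFn fun i => commF (a i) (b i)).prod

/-- The commutator length: the least number of commutators whose product is `g`. -/
noncomputable def cl {G : Type*} [Group G] (g : G) : ℕ :=
  sInf {n | IsProdOfCommutators g n}

section

variable {G : Type*} [Group G]

theorem cl_le_of_isProdOfCommutators {g : G} {n : ℕ} (h : IsProdOfCommutators g n) :
    cl g ≤ n :=
  Nat.sInf_le h

theorem isProdOfCommutators_commF_mul_commF (a b c d : G) :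
    IsProdOfCommutators (commF a b * commF c d) 2 :=
  ⟨![a, c], ![b, d], by simp⟩

theorem commF_pow_three (x y : G) :
    commF x y ^ 3 =
      commF (x⁻¹ * y * x) (x⁻¹ ^ 2 * y * x * y⁻¹) * commF (y * x * y⁻¹) (y ^ 2) := by
  simp only [commF, pow_succ, pow_zero, one_mul]
  group

end

theorem stmt_7 {G : Type*} [Group G] (x y : G) :
    cl (commF x y ^ 3) ≤ 2 ∧
      commF x y ^ 3 = commF (x⁻¹ * y * x) (x⁻¹ ^ 2 * y * x * y⁻¹) * commF (y * x * y⁻¹) (y ^ 2) := by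
  refine ⟨?_, commF_pow_three x y⟩
  rw [commF_pow_three]
  exact cl_le_of_isProdOfCommutators (isProdOfCommutators_commF_mul_commF _ _ _ _)
end

section
/- Let X be a finite set, Y ⊆ X, and σ a permutation of X such that every σ-orbit in X intersects Y. Then the map A ↦ A ∩ Y is a bijection between the set of σ-orbits in X and the set of σ_Y-orbits in Y; in particular σ and σ_Y have the same number of orbits. -/
/-!
The first-return map `σ_Y` moves each `y ∈ Y` forward along its `σ`-orbit, so `σ_Y`-orbits lie
inside `σ`-orbits. Conversely, if `σⁿ y ∈ Y` with `n ≥ 0`, the return time `m` of `y` satisfies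
`m ≤ n` by minimality, and induction on `n` shows `σⁿ y = σ_Yᵏ y` for some `k`. Hence the
`σ_Y`-orbit of `y` is exactly the trace on `Y` of its `σ`-orbit, and since every `σ`-orbit meets
`Y`, taking traces is a bijection of orbits.
-/

/-- The set of orbits of a permutation. -/
def orbits {X : Type*} (σ : Equiv.Perm X) : Set (Set X) :=
  {A | ∃ x : X, A = {z | ∃ n : ℤ, (σ ^ n) x = z}}

namespace Equiv.Perm

variable {α : Type*}

theorem SameCycle.of_forall_rel_apply {f : Perm α} {r : α → α → Prop} (hr : Equivalence r)
    (hf : ∀ x, r x (f x)) {x y : α} (h : f.SameCycle x y) : r x y := by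
  obtain ⟨i, rfl⟩ := h
  induction i with
  | zero => exact hr.refl x
  | succ i ih => exact hr.trans ih (by rw [add_comm, zpow_add, zpow_one, mul_apply]; exact hf _)
  | pred i ih =>
    refine hr.trans ih (hr.symm ?_)
    convert hf ((f ^ (-(i : ℤ) - 1)) x) using 1
    rw [← mul_apply, ← zpow_one_add, add_sub_cancel]

theorem setOf_sameCycle_eq {f : Perm α} {x y : α} (h : f.SameCycle x y) :
    {z | f.SameCycle x z} = {z | f.SameCycle y z} :=
  Set.ext fun _ => ⟨h.symm.trans, h.trans⟩

end Equiv.Perm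

open Equiv Equiv.Perm

def IsFirstReturnMap {X : Type*} {Y : Set X} (σ : Perm X) (σY : Perm Y) : Prop :=
  ∀ y : Y, ∃ m : ℕ, 1 ≤ m ∧ (∀ k : ℕ, 1 ≤ k → k < m → (σ ^ k) (y : X) ∉ Y) ∧
    ((σY y : X) = (σ ^ m) (y : X))

namespace IsFirstReturnMap

variable {X : Type*} {Y : Set X} {σ : Perm X} {σY : Perm Y}

theorem sameCycle_val (h : IsFirstReturnMap σ σY) {y z : Y} (hyz : σY.SameCycle y z) :
    σ.SameCycle y z := by
  refine hyz.of_forall_rel_apply (r := fun a b : Y => σ.SameCycle a b)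
    ⟨fun _ => .rfl, .symm, .trans⟩ fun y => ?_
  obtain ⟨m, -, -, hm⟩ := h y
  exact ⟨m, by rw [hm, zpow_natCast]⟩

theorem sameCycle_of_pow_apply_eq (h : IsFirstReturnMap σ σY) (n : ℕ) :
    ∀ {y z : Y}, (σ ^ n) (y : X) = z → σY.SameCycle y z := by
  induction n using Nat.strong_induction_on with
  | _ n ih =>
    intro y z hyz
    rcases Nat.eq_zero_or_pos n with rfl | hn
    · rw [pow_zero, one_apply] at hyz
      exact Subtype.ext hyz ▸ .rfl
    obtain ⟨m, hm1, hmin, hm⟩ := h y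
    have hmn : m ≤ n := by
      by_contra! hnm
      exact hmin n hn hnm (hyz ▸ z.2)
    have hsplit : (σ ^ (n - m)) (σY y : X) = z := by
      rw [hm, ← mul_apply, ← pow_add, Nat.sub_add_cancel hmn, hyz]
    exact sameCycle_apply_left.mp (ih (n - m) (by omega) hsplit)

theorem sameCycle_of_sameCycle_val (h : IsFirstReturnMap σ σY) {y z : Y}
    (hyz : σ.SameCycle y z) : σY.SameCycle y z := by
  obtain ⟨i, hi⟩ := hyz
  obtain ⟨n, rfl | rfl⟩ := Int.eq_nat_or_neg i
  · exact h.sameCycle_of_pow_apply_eq n (by simpa using hi)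
  · refine (h.sameCycle_of_pow_apply_eq n ?_).symm
    simp [← hi]

theorem preimage_val_setOf_sameCycle (h : IsFirstReturnMap σ σY) (y : Y) :
    Subtype.val ⁻¹' {x | σ.SameCycle y x} = {z | σY.SameCycle y z} :=
  Set.ext fun _ => ⟨h.sameCycle_of_sameCycle_val, h.sameCycle_val⟩

end IsFirstReturnMap

theorem stmt_10_general {X : Type*} (Y : Set X) (σ : Equiv.Perm X) (σY : Equiv.Perm Y)
    (hσY : ∀ y : Y, ∃ m : ℕ, 1 ≤ m ∧ (∀ k : ℕ, 1 ≤ k → k < m → (σ ^ k) (y : X) ∉ Y) ∧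
      ((σY y : X) = (σ ^ m) (y : X)))
    (hmeet : ∀ A ∈ orbits σ, (A ∩ Y).Nonempty) :
    Set.BijOn (fun A : Set X => ((Subtype.val ⁻¹' A : Set Y)))
        (orbits σ) (orbits σY) ∧
      Nat.card (orbits σ) = Nat.card (orbits σY) := by
  have hσY : IsFirstReturnMap σ σY := hσY
  -- The orbit `{z | ∃ n : ℤ, (σ ^ n) x = z}` of `orbits` is `{z | σ.SameCycle x z}` by definition.
  have horb : ∀ A ∈ orbits σ, ∃ y : Y, A = {x | σ.SameCycle y x} := by
    rintro A ⟨x, rfl⟩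
    obtain ⟨y, hxy, hy⟩ := hmeet _ ⟨x, rfl⟩
    exact ⟨⟨y, hy⟩, setOf_sameCycle_eq hxy⟩
  have hbij : Set.BijOn (fun A : Set X => ((Subtype.val ⁻¹' A : Set Y)))
      (orbits σ) (orbits σY) := by
    refine ⟨?_, ?_, ?_⟩
    · intro A hA
      obtain ⟨y, rfl⟩ := horb A hA
      exact ⟨y, hσY.preimage_val_setOf_sameCycle y⟩
    · intro A hA A' hA' hAA'
      obtain ⟨y, rfl⟩ := horb A hA
      obtain ⟨y', rfl⟩ := horb A' hA'
      have hy : σ.SameCycle y' y := (Set.ext_iff.mp hAA' y).mp SameCycle.rfl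
      exact setOf_sameCycle_eq hy.symm
    · rintro _ ⟨y, rfl⟩
      exact ⟨_, ⟨y, rfl⟩, hσY.preimage_val_setOf_sameCycle y⟩
  exact ⟨hbij, Nat.card_congr (hbij.equiv _)⟩

theorem stmt_10 {X : Type*} [Fintype X] (Y : Set X) (σ : Equiv.Perm X) (σY : Equiv.Perm Y)
    (hσY : ∀ y : Y, ∃ m : ℕ, 1 ≤ m ∧ (∀ k : ℕ, 1 ≤ k → k < m → (σ ^ k) (y : X) ∉ Y) ∧
      ((σY y : X) = (σ ^ m) (y : X)))
    (hmeet : ∀ A ∈ orbits σ, (A ∩ Y).Nonempty) :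
    Set.BijOn (fun A : Set X => ((Subtype.val ⁻¹' A : Set Y)))
        (orbits σ) (orbits σY) ∧
      Nat.card (orbits σ) = Nat.card (orbits σY) :=
  stmt_10_general Y σ σY hσY hmeet
end

section
/- Let α : Y → X be an injective map between finite sets, and σ, τ permutations of X with τ(α(Y)) = α(Y). Define τ̄ ∈ S(X) by τ̄(x) = τ(x) for x ∉ α(Y) and τ̄(x) = x for x ∈ α(Y). Then the induced permutation satisfies τ_α(y) = α⁻¹(τ(α(y))) for all y ∈ Y, and (στ)_α = (στ̄)_α ∘ τ_α. -/
/-!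
Since `τ` preserves `α(Y)`, its first return happens after one step, so `τ_α` is `τ` read
through `α`. For the composition, start `στ̄` at `α(τ_α y) = τ(α y)`: as `τ̄` fixes `α(Y)`, its
first step lands on `στ(α y)`, and afterwards `τ̄ = τ` off `α(Y)`, so the two orbits coincide
until `στ`'s orbit of `α y` returns to `α(Y)`. Both first returns are therefore the same point.
-/

/-- `e` is the permutation of `Y` induced (first-return) by `σ` through the injection `α`. -/
def IsInducedPerm {X Y : Type*} (α : Y → X) (σ : Equiv.Perm X) (e : Equiv.Perm Y) : Prop :=
  ∀ y : Y, ∃ m : ℕ, 1 ≤ m ∧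
    (∀ k : ℕ, 1 ≤ k → k < m → (σ ^ k) (α y) ∉ Set.range α) ∧
    α (e y) = (σ ^ m) (α y)

theorem Equiv.Perm.pow_apply_eq_pow_apply_of_eqOn_compl {X : Type*} {π π' : Equiv.Perm X}
    {S : Set X} {x x' : X} {m : ℕ} (hfirst : π' x' = π x) (hagree : Set.EqOn π' π Sᶜ)
    (hbefore : ∀ k, 1 ≤ k → k < m → (π ^ k) x ∉ S) :
    ∀ k, 1 ≤ k → k ≤ m → (π' ^ k) x' = (π ^ k) x := by
  refine Nat.le_induction (fun _ => by simpa using hfirst) fun k hk ih hkm => ?_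
  rw [pow_succ', pow_succ', Equiv.Perm.mul_apply, Equiv.Perm.mul_apply, ih (by omega)]
  exact hagree (hbefore k hk hkm)

section IsInducedPerm

variable {X Y : Type*} {α : Y → X} {σ : Equiv.Perm X} {e : Equiv.Perm Y}

theorem IsInducedPerm.apply_eq_of_mapsTo (he : IsInducedPerm α σ e)
    (hσ : Set.MapsTo σ (Set.range α) (Set.range α)) (y : Y) : α (e y) = σ (α y) := by
  obtain ⟨m, hm, hbefore, hret⟩ := he y
  obtain rfl : m = 1 := by
    by_contra hm1
    exact hbefore 1 le_rfl (by omega) (by simpa using hσ (Set.mem_range_self y))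
  simpa using hret

theorem IsInducedPerm.apply_eq_of_firstReturn (he : IsInducedPerm α σ e)
    (hα : Function.Injective α) {y y' : Y} {m : ℕ} (hm : 1 ≤ m)
    (hbefore : ∀ k, 1 ≤ k → k < m → (σ ^ k) (α y) ∉ Set.range α)
    (hret : (σ ^ m) (α y) = α y') : e y = y' := by
  obtain ⟨m', hm', hbefore', hret'⟩ := he y
  obtain rfl : m' = m := by
    by_contra hne
    rcases Nat.lt_or_gt_of_ne hne with hlt | hlt
    · exact hbefore m' hm' hlt (hret' ▸ Set.mem_range_self _)
    · exact hbefore' m hm hlt (hret ▸ Set.mem_range_self _)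
  exact hα (hret'.trans hret)

end IsInducedPerm

theorem stmt_11_general {X Y : Type*} (α : Y → X) (hα : Function.Injective α)
    (σ τ τb : Equiv.Perm X)
    (hτ : τ '' Set.range α = Set.range α)
    (hτb1 : ∀ x ∉ Set.range α, τb x = τ x) (hτb2 : ∀ x ∈ Set.range α, τb x = x)
    (eτ eστ eστb : Equiv.Perm Y)
    (heτ : IsInducedPerm α τ eτ)
    (heστ : IsInducedPerm α (σ * τ) eστ)
    (heστb : IsInducedPerm α (σ * τb) eστb) :
    (∀ y : Y, α (eτ y) = τ (α y)) ∧ eστ = eστb * eτ := by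
  have hmaps : Set.MapsTo τ (Set.range α) (Set.range α) := Set.mapsTo_iff_image_subset.2 hτ.subset
  have hτα := heτ.apply_eq_of_mapsTo hmaps
  refine ⟨hτα, Equiv.ext fun y => ?_⟩
  obtain ⟨m, hm, hbefore, hret⟩ := heστ y
  have horbit : ∀ k, 1 ≤ k → k ≤ m → ((σ * τb) ^ k) (α (eτ y)) = ((σ * τ) ^ k) (α y) :=
    Equiv.Perm.pow_apply_eq_pow_apply_of_eqOn_compl
      (by simp [hτα, hτb2 _ (hmaps (Set.mem_range_self y))])
      (fun z hz => by simp [hτb1 z hz]) hbefore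
  refine (heστb.apply_eq_of_firstReturn hα hm (fun k hk hkm => ?_) ?_).symm
  · rw [horbit k hk hkm.le]
    exact hbefore k hk hkm
  · rw [horbit m hm le_rfl, hret]

theorem stmt_11 {X Y : Type*} [Fintype X] [Fintype Y] (α : Y → X) (hα : Function.Injective α)
    (σ τ τb : Equiv.Perm X)
    (hτ : τ '' Set.range α = Set.range α)
    (hτb1 : ∀ x ∉ Set.range α, τb x = τ x) (hτb2 : ∀ x ∈ Set.range α, τb x = x)
    (eτ eστ eστb : Equiv.Perm Y)
    (heτ : IsInducedPerm α τ eτ)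
    (heστ : IsInducedPerm α (σ * τ) eστ)
    (heστb : IsInducedPerm α (σ * τb) eστb) :
    (∀ y : Y, α (eτ y) = τ (α y)) ∧ eστ = eστb * eτ :=
  stmt_11_general α hα σ τ τb hτ hτb1 hτb2 eτ eστ eστb heτ heστ heστb
end

section
/- Let α : Y → X be injective between finite sets and σ a permutation of X such that every σ-orbit intersects α(Y). Then σ and the induced permutation σ_α ∈ S(Y) have equal numbers of orbits: o(σ) = o(σ_α). -/
/-!
The `e`-iterates of `y` are exactly the successive visits of the `σ`-orbit of `α y` to `α(Y)`,
so `y, y'` lie in the same `e`-cycle iff `α y, α y'` lie in the same `σ`-cycle. Hence `α`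
induces an injection of `e`-cycles into `σ`-cycles, which is onto because every `σ`-cycle
meets `α(Y)`.
-/

open Equiv Equiv.Perm

lemma orbits_eq_classes {X : Type*} (σ : Perm X) : orbits σ = (SameCycle.setoid σ).classes := by
  ext A
  simp only [orbits, Setoid.classes, Set.mem_ofPred_eq]
  refine exists_congr fun x => ?_
  rw [show {z | ∃ n : ℤ, (σ ^ n) x = z} = {z | σ.SameCycle z x} from
    Set.ext fun _ => sameCycle_comm]
  rfl

lemma card_orbits_eq_card_quotient {X : Type*} (σ : Perm X) :
    Nat.card (orbits σ) = Nat.card (Quotient (SameCycle.setoid σ)) := by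
  rw [orbits_eq_classes]
  exact (Nat.card_congr (Setoid.quotientEquivClasses _)).symm

namespace IsInducedPerm

variable {X Y : Type*} {α : Y → X} {σ : Perm X} {e : Perm Y}

lemma sameCycle_apply (he : IsInducedPerm α σ e) (y : Y) : σ.SameCycle (α y) (α (e y)) := by
  obtain ⟨m, -, -, hm⟩ := he y
  exact ⟨m, by rw [zpow_natCast, hm]⟩

lemma sameCycle_of_sameCycle (he : IsInducedPerm α σ e) {y y' : Y} (h : e.SameCycle y y') :
    σ.SameCycle (α y) (α y') := by
  obtain ⟨n, rfl⟩ := h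
  induction n using Int.induction_on with
  | zero => rfl
  | succ n ih =>
    rw [add_comm, zpow_one_add, mul_apply]
    exact ih.trans (he.sameCycle_apply _)
  | pred n ih =>
    have hstep : e ((e ^ (-(n : ℤ) - 1)) y) = (e ^ (-(n : ℤ))) y := by
      rw [← mul_apply, ← zpow_one_add, add_sub_cancel]
    exact ih.trans (hstep ▸ he.sameCycle_apply _).symm

lemma sameCycle_of_pow_apply_eq (hα : Function.Injective α) (he : IsInducedPerm α σ e)
    (n : ℕ) {y y' : Y} (h : (σ ^ n) (α y) = α y') : e.SameCycle y y' := by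
  induction n using Nat.strong_induction_on generalizing y with
  | _ n ih =>
    rcases Nat.eq_zero_or_pos n with rfl | hn
    · exact (hα h).sameCycle e
    obtain ⟨m, hm1, hmin, hm⟩ := he y
    have hmn : m ≤ n := by
      by_contra! hnm
      exact hmin n hn hnm ⟨y', h.symm⟩
    have hrest : (σ ^ (n - m)) (α (e y)) = α y' := by
      rw [hm, ← mul_apply, ← pow_add, Nat.sub_add_cancel hmn, h]
    exact sameCycle_apply_left.1 (ih (n - m) (Nat.sub_lt hn hm1) hrest)

lemma sameCycle_iff (hα : Function.Injective α) (he : IsInducedPerm α σ e) {y y' : Y} :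
    e.SameCycle y y' ↔ σ.SameCycle (α y) (α y') := by
  refine ⟨he.sameCycle_of_sameCycle, fun ⟨n, hn⟩ => ?_⟩
  obtain ⟨k, rfl | rfl⟩ := Int.eq_nat_or_neg n
  · exact he.sameCycle_of_pow_apply_eq hα k (by rwa [zpow_natCast] at hn)
  · refine (he.sameCycle_of_pow_apply_eq hα k ?_).symm
    rw [← hn, ← mul_apply, ← zpow_natCast, ← zpow_add, add_neg_cancel, zpow_zero, one_apply]

end IsInducedPerm

theorem stmt_12_general {X Y : Type*} (α : Y → X) (hα : Function.Injective α)
    (σ : Equiv.Perm X) (e : Equiv.Perm Y) (he : IsInducedPerm α σ e)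
    (hmeet : ∀ x : X, ∃ n : ℤ, (σ ^ n) x ∈ Set.range α) :
    Nat.card (orbits σ) = Nat.card (orbits e) := by
  let f : Quotient (SameCycle.setoid e) → Quotient (SameCycle.setoid σ) :=
    Quotient.map α fun _ _ => (he.sameCycle_iff hα).1
  have hf : Function.Bijective f := by
    refine ⟨fun a b hab => ?_, fun c => ?_⟩
    · induction a using Quotient.inductionOn
      induction b using Quotient.inductionOn
      exact Quotient.sound ((he.sameCycle_iff hα).2 (Quotient.exact hab))
    · induction c using Quotient.inductionOn with | _ x
      obtain ⟨n, y, hy⟩ := hmeet x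
      exact ⟨⟦y⟧, Quotient.sound (SameCycle.symm ⟨n, hy.symm⟩)⟩
  rw [card_orbits_eq_card_quotient, card_orbits_eq_card_quotient]
  exact (Nat.card_congr (Equiv.ofBijective f hf)).symm

theorem stmt_12 {X Y : Type*} [Fintype X] [Fintype Y] (α : Y → X) (hα : Function.Injective α)
    (σ : Equiv.Perm X) (e : Equiv.Perm Y) (he : IsInducedPerm α σ e)
    (hmeet : ∀ x : X, ∃ n : ℤ, (σ ^ n) x ∈ Set.range α) :
    Nat.card (orbits σ) = Nat.card (orbits e) :=
  stmt_12_general α hα σ e he hmeet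
end

section
/- Let n ≥ 5 and 1 ≤ i₁ < i₂ < i₃ < i₄ ≤ n. Then the permutation C̃ = (1,2,…,n)·(i₁ i₃)·(i₂ i₄) of {1,…,n} (product of the long cycle with the two transpositions) is itself an n-cycle. -/
/-! The orbit of `i₁` under `C̃` runs through the blocks of `{1, …, n}` cut out by
`i₁ < i₂ < i₃ < i₄`: from `i₁` it jumps to `i₃ + 1` and climbs to `i₄`, jumps to `i₂ + 1` and
climbs to `i₃`, jumps to `i₁ + 1` and climbs to `i₂`, and from `i₂` it jumps to `i₄ + 1` (when
`i₄ < n`) and climbs to `n`; the remaining block `1, …, i₁` climbs to `i₁`. So all points lie in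
one cycle, and since there are at least two of them, `C̃` has no fixed point. -/

open Equiv Equiv.Perm

theorem coe_finRotate_of_val_add_one_lt {n : ℕ} {i : Fin n} (h : (i : ℕ) + 1 < n) :
    (finRotate n i : ℕ) = i + 1 := by
  obtain ⟨m, rfl⟩ : ∃ m, n = m + 1 := ⟨n - 1, by omega⟩
  exact coe_finRotate_of_ne_last (Fin.ne_of_val_ne (by simp; omega))

namespace Equiv.Perm

theorem isCycle_and_support_eq_univ_of_forall_sameCycle {α : Type*} [Fintype α] [DecidableEq α]
    [Nontrivial α] {σ : Perm α} (h : ∀ x y, σ.SameCycle x y) :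
    σ.IsCycle ∧ σ.support = Finset.univ := by
  have hfix (x : α) : σ x ≠ x := fun hx =>
    let ⟨y, hy⟩ := exists_ne x
    hy ((h x y).eq_of_left hx).symm
  obtain ⟨x⟩ := ‹Nontrivial α›.to_nonempty
  exact ⟨⟨x, hfix x, fun y _ => h x y⟩, Finset.eq_univ_of_forall fun y => mem_support.2 (hfix y)⟩

theorem sameCycle_of_forall_apply_eq_finRotate {n : ℕ} {σ : Perm (Fin n)} {x y : Fin n}
    (hxy : x ≤ y) (h : ∀ z, x ≤ z → z < y → σ z = finRotate n z) : σ.SameCycle x y := by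
  obtain ⟨k, hk⟩ : ∃ k, (y : ℕ) = x + k := ⟨y - x, by omega⟩
  induction k generalizing y with
  | zero => exact Fin.ext hk ▸ SameCycle.refl σ x
  | succ k ih =>
    let y' : Fin n := ⟨x + k, by omega⟩
    have hy'_val : (y' : ℕ) = x + k := rfl
    have hy' : σ y' = y := Fin.ext <| by
      rw [h y' (by omega) (by omega), coe_finRotate_of_val_add_one_lt (by omega)]
      omega
    exact hy' ▸ sameCycle_apply_right.2 (ih (by omega) (fun z hz _ => h z hz (by omega)) rfl)

end Equiv.Perm

section

variable {n : ℕ} {a b c d : Fin n}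

theorem finRotate_mul_swap_mul_swap_apply_of_ne {z : Fin n} (ha : z ≠ a) (hb : z ≠ b)
    (hc : z ≠ c) (hd : z ≠ d) : (finRotate n * swap a c * swap b d) z = finRotate n z := by
  simp [Perm.mul_apply, swap_apply_of_ne_of_ne, *]

theorem finRotate_mul_swap_mul_swap_apply_of_lt (hab : a < b) (hbc : b < c) (hcd : c < d) :
    let σ := finRotate n * swap a c * swap b d
    σ a = finRotate n c ∧ σ b = finRotate n d ∧ σ c = finRotate n a ∧ σ d = finRotate n b := by
  have had := (hab.trans hbc).trans hcd
  simp [swap_apply_of_ne_of_ne, hab.ne, hab.ne', hbc.ne, hbc.ne', hcd.ne, hcd.ne', had.ne, had.ne']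

theorem sameCycle_finRotate_mul_swap_mul_swap (hab : a < b) (hbc : b < c) (hcd : c < d)
    (y : Fin n) : (finRotate n * swap a c * swap b d).SameCycle a y := by
  set σ := finRotate n * swap a c * swap b d
  have climb (x y : Fin n) (hxy : x ≤ y)
      (hfree : ∀ z, x ≤ z → z < y → ¬(z = a ∨ z = b ∨ z = c ∨ z = d)) : σ.SameCycle x y :=
    sameCycle_of_forall_apply_eq_finRotate hxy fun z hx hy => by
      have := hfree z hx hy
      exact finRotate_mul_swap_mul_swap_apply_of_ne (by omega) (by omega) (by omega) (by omega)
  have jump (x y : Fin n) (hxy : σ x ≤ y)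
      (hfree : ∀ z, σ x ≤ z → z < y → ¬(z = a ∨ z = b ∨ z = c ∨ z = d)) : σ.SameCycle x y :=
    sameCycle_apply_left.1 (climb _ _ hxy hfree)
  obtain ⟨hσa, hσb, hσc, hσd⟩ := finRotate_mul_swap_mul_swap_apply_of_lt hab hbc hcd
  have hσa' : (σ a : ℕ) = c + 1 := by rw [hσa, coe_finRotate_of_val_add_one_lt (by omega)]
  have hσc' : (σ c : ℕ) = a + 1 := by rw [hσc, coe_finRotate_of_val_add_one_lt (by omega)]
  have hσd' : (σ d : ℕ) = b + 1 := by rw [hσd, coe_finRotate_of_val_add_one_lt (by omega)]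
  have had : σ.SameCycle a d := jump a d (by omega) (by omega)
  have hdc : σ.SameCycle d c := jump d c (by omega) (by omega)
  have hcb : σ.SameCycle c b := jump c b (by omega) (by omega)
  rcases le_or_gt y a with hya | hay
  · exact (climb y a hya (by omega)).symm
  rcases le_or_gt y b with hyb | hby
  · exact (had.trans hdc).trans (jump c y (by omega) (by omega))
  rcases le_or_gt y c with hyc | hcy
  · exact had.trans (jump d y (by omega) (by omega))
  rcases le_or_gt y d with hyd | hdy
  · exact jump a y (by omega) (by omega)
  have hσb' : (σ b : ℕ) = d + 1 := by rw [hσb, coe_finRotate_of_val_add_one_lt (by omega)]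
  exact ((had.trans hdc).trans hcb).trans (jump b y (by omega) (by omega))

end

theorem stmt_13_general (n : ℕ) (i1 i2 i3 i4 : Fin n)
    (h12 : i1 < i2) (h23 : i2 < i3) (h34 : i3 < i4) :
    (finRotate n * Equiv.swap i1 i3 * Equiv.swap i2 i4).IsCycle ∧
      (finRotate n * Equiv.swap i1 i3 * Equiv.swap i2 i4).support = Finset.univ := by
  have : Nontrivial (Fin n) := Fin.nontrivial_iff_two_le.2 (by omega)
  have h := sameCycle_finRotate_mul_swap_mul_swap h12 h23 h34
  exact isCycle_and_support_eq_univ_of_forall_sameCycle fun x y => (h x).symm.trans (h y)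

theorem stmt_13 (n : ℕ) (hn : 5 ≤ n) (i1 i2 i3 i4 : Fin n)
    (h12 : i1 < i2) (h23 : i2 < i3) (h34 : i3 < i4) :
    (finRotate n * Equiv.swap i1 i3 * Equiv.swap i2 i4).IsCycle ∧
      (finRotate n * Equiv.swap i1 i3 * Equiv.swap i2 i4).support = Finset.univ :=
  stmt_13_general n i1 i2 i3 i4 h12 h23 h34
end

section
/- Let n ≥ 5, 1 ≤ i₁ < i₂ < i₃ < i₄ ≤ n, and let σ = (1,…,n)·(i₁ i₃)·(i₂ i₄). Then no σ-orbit is contained in the set {i₁, i₂, i₃, i₄}; equivalently, every σ-orbit meets {1,…,n} \ {i₁,i₂,i₃,i₄}. -/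
/-!
Write `S = {a, b, c, d}` with `a < b < c < d` and `σ = (1,…,n)(a c)(b d)`, so `σ a = c + 1`,
`σ b = d + 1`, `σ c = a + 1`, `σ d = b + 1`. A point `p ∈ S` can only have `p + 1 ∈ S` when
`p + 1` is the cyclic successor of `p` in `S`; hence on a σ-invariant subset of `S` the map `σ` is
the 4-cycle `a ↦ d ↦ c ↦ b ↦ a`, which forces all four gaps of `S` to be `1` and `n = 4`.
-/

open Equiv

namespace Fin

variable {m : ℕ} {S : Set (Fin (m + 1))}

theorem add_one_eq_of_forall_mem {p q : Fin (m + 1)} (hpq : p < q)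
    (hgap : ∀ s ∈ S, s ≤ p ∨ q ≤ s) (h : p + 1 ∈ S) : p + 1 = q := by
  have hv : (p + 1).val = p.val + 1 := val_add_one_of_lt (hpq.trans_le (le_last q))
  rcases hgap _ h with hle | hle
  · exact absurd hle (by rw [not_le, lt_def, hv]; omega)
  · rw [le_def, hv] at hle
    rw [lt_def] at hpq
    ext
    omega

theorem add_one_eq_of_forall_mem_le {p q : Fin (m + 1)} (hp : ∀ s ∈ S, s ≤ p)
    (hq : ∀ s ∈ S, q ≤ s) (h : p + 1 ∈ S) : p + 1 = q := by
  by_cases hlast : p = last m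
  · rw [hlast, last_add_one] at h ⊢
    exact le_antisymm (zero_le q) (hq 0 h)
  · have hv : (p + 1).val = p.val + 1 := val_add_one_of_lt (lt_of_le_of_ne (le_last p) hlast)
    exact absurd (hp _ h) (by rw [not_le, lt_def, hv]; omega)

theorem eq_three_of_add_one_cycle {a b c d : Fin (m + 1)} (hab : a < b) (hbc : b < c)
    (hcd : c < d) (e₁ : a + 1 = b) (e₂ : b + 1 = c) (e₃ : c + 1 = d) (e₄ : d + 1 = a) :
    m = 3 := by
  have hb : b.val = a.val + 1 := e₁ ▸ val_add_one_of_lt (hab.trans_le (le_last b))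
  have hc : c.val = b.val + 1 := e₂ ▸ val_add_one_of_lt (hbc.trans_le (le_last c))
  have hd : d.val = c.val + 1 := e₃ ▸ val_add_one_of_lt (hcd.trans_le (le_last d))
  have hlast : d = last m := by
    by_contra hne
    have hv := val_add_one_of_lt (lt_of_le_of_ne (le_last d) hne)
    rw [e₄] at hv
    omega
  have ha : a = 0 := by rw [← e₄, hlast, last_add_one]
  rw [hlast, val_last] at hd
  rw [ha, val_zero] at hb
  omega

end Fin

def crossingPerm (n : ℕ) (a b c d : Fin n) : Perm (Fin n) :=
  finRotate n * swap a c * swap b d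

section CrossingPerm

variable {m : ℕ} {a b c d : Fin (m + 1)}

theorem crossingPerm_apply_a (hab : a ≠ b) (had : a ≠ d) :
    crossingPerm (m + 1) a b c d a = c + 1 := by
  simp [crossingPerm, swap_apply_of_ne_of_ne hab had]

theorem crossingPerm_apply_b (hda : d ≠ a) (hdc : d ≠ c) :
    crossingPerm (m + 1) a b c d b = d + 1 := by
  simp [crossingPerm, swap_apply_of_ne_of_ne hda hdc]

theorem crossingPerm_apply_c (hcb : c ≠ b) (hcd : c ≠ d) :
    crossingPerm (m + 1) a b c d c = a + 1 := by
  simp [crossingPerm, swap_apply_of_ne_of_ne hcb hcd]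

theorem crossingPerm_apply_d (hba : b ≠ a) (hbc : b ≠ c) :
    crossingPerm (m + 1) a b c d d = b + 1 := by
  simp [crossingPerm, swap_apply_of_ne_of_ne hba hbc]

theorem crossingPerm_invariant_eq_empty (hab : a < b) (hbc : b < c) (hcd : c < d) (hm : m ≠ 3)
    {T : Set (Fin (m + 1))} (hTS : T ⊆ {a, b, c, d})
    (hT : ∀ y ∈ T, crossingPerm (m + 1) a b c d y ∈ T) : T = ∅ := by
  have hac := hab.trans hbc
  have hbd := hbc.trans hcd
  have had := hac.trans hcd
  have hS : ∀ y ∈ T, crossingPerm (m + 1) a b c d y ∈ ({a, b, c, d} : Set _) :=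
    fun y hy ↦ hTS (hT y hy)
  have step_a : a ∈ T → c + 1 = d := fun h ↦ Fin.add_one_eq_of_forall_mem hcd
    (by simp [hac.le, hbc.le]) (crossingPerm_apply_a hab.ne had.ne ▸ hS a h)
  have step_b : b ∈ T → d + 1 = a := fun h ↦ Fin.add_one_eq_of_forall_mem_le
    (by simp [had.le, hbd.le, hcd.le]) (by simp [hab.le, hac.le, had.le])
    (crossingPerm_apply_b had.ne' hcd.ne' ▸ hS b h)
  have step_c : c ∈ T → a + 1 = b := fun h ↦ Fin.add_one_eq_of_forall_mem hab
    (by simp [hbc.le, hbd.le]) (crossingPerm_apply_c hbc.ne' hcd.ne ▸ hS c h)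
  have step_d : d ∈ T → b + 1 = c := fun h ↦ Fin.add_one_eq_of_forall_mem hbc
    (by simp [hab.le, hcd.le]) (crossingPerm_apply_d hab.ne' hbc.ne ▸ hS d h)
  have a_d : a ∈ T → d ∈ T := fun h ↦
    step_a h ▸ crossingPerm_apply_a hab.ne had.ne ▸ hT a h
  have b_a : b ∈ T → a ∈ T := fun h ↦
    step_b h ▸ crossingPerm_apply_b had.ne' hcd.ne' ▸ hT b h
  have c_b : c ∈ T → b ∈ T := fun h ↦
    step_c h ▸ crossingPerm_apply_c hbc.ne' hcd.ne ▸ hT c h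
  have d_c : d ∈ T → c ∈ T := fun h ↦
    step_d h ▸ crossingPerm_apply_d hab.ne' hbc.ne ▸ hT d h
  refine Set.eq_empty_of_forall_notMem fun y hy ↦ ?_
  have ha : a ∈ T := by
    rcases hTS hy with rfl | rfl | rfl | rfl
    exacts [hy, b_a hy, b_a (c_b hy), b_a (c_b (d_c hy))]
  have := Fin.eq_three_of_add_one_cycle hab hbc hcd (step_c (d_c (a_d ha)))
    (step_d (a_d ha)) (step_a ha) (step_b (c_b (d_c (a_d ha))))
  exact hm this

end CrossingPerm

theorem stmt_14 (n : ℕ) (hn : 5 ≤ n) (i1 i2 i3 i4 : Fin n)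
    (h12 : i1 < i2) (h23 : i2 < i3) (h34 : i3 < i4) :
    ∀ x : Fin n, ∃ k : ℤ,
      ((finRotate n * Equiv.swap i1 i3 * Equiv.swap i2 i4) ^ k) x ∉
        ({i1, i2, i3, i4} : Set (Fin n)) := by
  obtain ⟨m, rfl⟩ : ∃ m, n = m + 1 := ⟨n - 1, by omega⟩
  intro x
  by_contra! hx
  let T := {y | ∀ k : ℤ,
    (crossingPerm (m + 1) i1 i2 i3 i4 ^ k) y ∈ ({i1, i2, i3, i4} : Set (Fin (m + 1)))}
  have hT : T = ∅ := crossingPerm_invariant_eq_empty h12 h23 h34 (by omega) (fun y hy ↦ hy 0)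
    fun y hy k ↦ by simpa [zpow_add_one] using hy (k + 1)
  exact hT.subset (show x ∈ T from hx)
end

section
/- Let n ≥ 5, 1 ≤ i₁ < i₂ < i₃ < i₄ ≤ n, let π ∈ Sₙ be an involution with π(i₁) = i₃ and π(i₂) = i₄, and let σ = (1,…,n)·π. Then no σ-orbit is contained in {i₁,i₂,i₃,i₄}. -/
/-!
Write `σ y = π y + 1`; then `σ` sends `i₁, i₂, i₃, i₄` to `i₃ + 1, i₄ + 1, i₁ + 1, i₂ + 1`. Each of
these lies in `{i₁, i₂, i₃, i₄}` only if it is the cyclic predecessor of the point it came from, i.e.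
`i₁ ↦ i₄ ↦ i₃ ↦ i₂ ↦ i₁`, and this requires the corresponding gap `i₄ - i₃`, `i₃ - i₂`, `i₂ - i₁`,
`i₁ - i₄` (mod `n`) to be `1`. So an orbit inside the four points contains all of them, all four gaps
are `1`, and going once around the cycle gives `n ∣ 4`.
-/

namespace Fin

variable {n : ℕ} {s : Set (Fin (n + 1))} {p q : Fin (n + 1)}

theorem add_one_eq_of_mem_of_disjoint_Ioo (hpq : p < q) (hs : Disjoint s (Set.Ioo p q))
    (h : p + 1 ∈ s) : p + 1 = q := by
  refine (add_one_le_of_lt hpq).eq_of_not_lt fun hlt => Set.disjoint_left.1 hs h ⟨?_, hlt⟩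
  exact lt_add_one_iff.2 (hpq.trans_le (le_last q))

theorem add_one_eq_of_mem_of_subset_Icc (hs : s ⊆ Set.Icc q p) (h : p + 1 ∈ s) : p + 1 = q := by
  obtain rfl : p = last n := by
    by_contra hp
    exact (hs h).2.not_gt (lt_add_one_iff.2 (lt_last_iff_ne_last.2 hp))
  rw [last_add_one] at h ⊢
  exact (le_zero_iff.1 (hs h).1).symm

end Fin

theorem dvd_four_of_mapsTo_subset {m : ℕ} {a b c d : Fin (m + 1)}
    (hab : a < b) (hbc : b < c) (hcd : c < d) {f : Fin (m + 1) → Fin (m + 1)}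
    (ha : f a = c + 1) (hb : f b = d + 1) (hc : f c = a + 1) (hd : f d = b + 1)
    {O : Set (Fin (m + 1))} (hOS : O ⊆ {a, b, c, d}) (hO : O.Nonempty) (hf : Set.MapsTo f O O) :
    m + 1 ∣ 4 := by
  have gap {p q : Fin (m + 1)} (hpq : p < q) (hp : ∀ y ∈ ({a, b, c, d} : Set _), y ≤ p ∨ q ≤ y)
      (h : p + 1 ∈ O) : p + 1 = q :=
    Fin.add_one_eq_of_mem_of_disjoint_Ioo hpq
      (Set.disjoint_left.2 fun y hy hy' => (hp y hy).elim hy'.1.not_ge hy'.2.not_ge) (hOS h)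
  have hgap : ∀ y ∈ ({a, b, c, d} : Set (Fin (m + 1))),
      (y ≤ a ∨ b ≤ y) ∧ (y ≤ b ∨ c ≤ y) ∧ (y ≤ c ∨ d ≤ y) ∧ a ≤ y ∧ y ≤ d := by
    simp only [Set.mem_insert_iff, Set.mem_singleton_iff]
    rintro y (rfl | rfl | rfl | rfl) <;> refine ⟨?_, ?_, ?_, ?_, ?_⟩ <;> order
  have succ_c (h : a ∈ O) : c + 1 = d := gap hcd (fun y hy => (hgap y hy).2.2.1) (ha ▸ hf h)
  have succ_d (h : b ∈ O) : d + 1 = a :=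
    Fin.add_one_eq_of_mem_of_subset_Icc (fun y hy => (hgap y (hOS hy)).2.2.2) (hb ▸ hf h)
  have succ_a (h : c ∈ O) : a + 1 = b := gap hab (fun y hy => (hgap y hy).1) (hc ▸ hf h)
  have succ_b (h : d ∈ O) : b + 1 = c := gap hbc (fun y hy => (hgap y hy).2.1) (hd ▸ hf h)
  have haO : a ∈ O := by
    have nextB (h : b ∈ O) : a ∈ O := succ_d h ▸ hb ▸ hf h
    have nextC (h : c ∈ O) : b ∈ O := succ_a h ▸ hc ▸ hf h
    have nextD (h : d ∈ O) : c ∈ O := succ_b h ▸ hd ▸ hf h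
    obtain ⟨x, hx⟩ := hO
    rcases hOS hx with rfl | rfl | rfl | rfl
    exacts [hx, nextB hx, nextB (nextC hx), nextB (nextC (nextD hx))]
  have hdO : d ∈ O := succ_c haO ▸ ha ▸ hf haO
  have hcO : c ∈ O := succ_b hdO ▸ hd ▸ hf hdO
  have hbO : b ∈ O := succ_a hcO ▸ hc ▸ hf hcO
  have h4 : a + 4 = a := calc
    a + 4 = a + 1 + 1 + 1 + 1 := by open Fin.CommRing in ring
    _ = a := by rw [succ_a hcO, succ_b hdO, succ_c haO, succ_d hbO]
  exact Fin.natCast_eq_zero.1 (mod_cast add_eq_left.1 h4)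

theorem stmt_15 (n : ℕ) (hn : 5 ≤ n) (i1 i2 i3 i4 : Fin n)
    (h12 : i1 < i2) (h23 : i2 < i3) (h34 : i3 < i4)
    (π : Equiv.Perm (Fin n)) (hinv : π * π = 1) (hπ1 : π i1 = i3) (hπ2 : π i2 = i4) :
    ∀ x : Fin n, ∃ k : ℤ,
      ((finRotate n * π) ^ k) x ∉ ({i1, i2, i3, i4} : Set (Fin n)) := by
  intro x
  by_contra! hx
  obtain ⟨m, rfl⟩ : ∃ m, n = m + 1 := ⟨n - 1, by omega⟩
  set σ := finRotate (m + 1) * π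
  have hσ (y) : σ y = π y + 1 := finRotate_apply (π y)
  have hππ (y) : π (π y) = y := by rw [← Equiv.Perm.mul_apply, hinv, Equiv.Perm.one_apply]
  have h4 : m + 1 ∣ 4 :=
    dvd_four_of_mapsTo_subset h12 h23 h34 (f := σ) (O := Set.range fun k : ℤ => (σ ^ k) x)
      (by rw [hσ, hπ1]) (by rw [hσ, hπ2]) (by rw [hσ, ← hπ1, hππ]) (by rw [hσ, ← hπ2, hππ])
      (Set.range_subset_iff.2 hx) (Set.range_nonempty _)
      (by rintro _ ⟨k, rfl⟩; exact ⟨1 + k, by simp only [zpow_one_add, Equiv.Perm.mul_apply]⟩)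
  have := Nat.le_of_dvd four_pos h4
  omega
end

section
/- Let w be a nontrivial element of the commutator subgroup of a free group F, represented by a reduced word W = a₁⋯aₙ in the generators and their inverses. Then there exist indices i₁ < i₂ < i₃ < i₄ such that a_{i₃} = a_{i₁}⁻¹, a_{i₄} = a_{i₂}⁻¹; i.e., W admits a factorization without cancellation W = W₁ a⁻¹ W₂ b⁻¹ W₃ a W₄ b W₅ with a, b generators or inverse generators. -/
/-!
Exponent sums factor through the abelianization, so in the reduced word of a commutator every
letter occurs as often as its inverse. Pick a letter `q` followed, at minimal distance, by an
occurrence of `q⁻¹`. Reducedness keeps the two apart, and by minimality the inverse of the letter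
`c` right after `q` lies outside the stretch between them; this gives a crossing
`c⁻¹ … q c … q⁻¹` or `q c … q⁻¹ … c⁻¹`.
-/

namespace List

variable {β : Type*}

theorem getElem_cons_sublist_drop {L l : List β} {i j : ℕ} (hi : i < L.length) (hij : i < j)
    (hl : l <+ L.drop j) : L[i] :: l <+ L.drop i := by
  rw [drop_eq_getElem_cons hi]
  exact (hl.trans (drop_sublist_drop_left L hij)).cons_cons _

theorem exists_eq_append_cons_of_cons_sublist {a : β} {l L : List β} (h : a :: l <+ L) :
    ∃ s t, L = s ++ a :: t ∧ l <+ t := by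
  obtain ⟨r₁, r₂, rfl, ha, hl⟩ := cons_sublist_iff.1 h
  obtain ⟨s, t, rfl⟩ := append_of_mem ha
  exact ⟨s, t ++ r₂, by simp, hl.trans (sublist_append_right t r₂)⟩

theorem exists_eq_append_of_sublist_four {x₁ x₂ x₃ x₄ : β} {L : List β}
    (h : [x₁, x₂, x₃, x₄] <+ L) :
    ∃ W₁ W₂ W₃ W₄ W₅ : List β,
      L = W₁ ++ [x₁] ++ W₂ ++ [x₂] ++ W₃ ++ [x₃] ++ W₄ ++ [x₄] ++ W₅ := by
  obtain ⟨W₁, t₁, rfl, h₁⟩ := exists_eq_append_cons_of_cons_sublist h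
  obtain ⟨W₂, t₂, rfl, h₂⟩ := exists_eq_append_cons_of_cons_sublist h₁
  obtain ⟨W₃, t₃, rfl, h₃⟩ := exists_eq_append_cons_of_cons_sublist h₂
  obtain ⟨W₄, W₅, rfl, -⟩ := exists_eq_append_cons_of_cons_sublist h₃
  exact ⟨W₁, W₂, W₃, W₄, W₅, by simp⟩

end List

namespace FreeGroup

open scoped List

variable {α : Type*}

theorem eq_inv_letter_comm {p q : α × Bool} : p = (q.1, !q.2) ↔ q = (p.1, !p.2) := by
  obtain ⟨x, a⟩ := p
  obtain ⟨y, b⟩ := q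
  cases a <;> cases b <;> simp [eq_comm]

theorem IsReduced.getElem_succ_ne_inv {L : List (α × Bool)} (h : IsReduced L) {i : ℕ}
    (hi : i + 1 < L.length) : L[i + 1] ≠ (L[i].1, !L[i].2) := fun heq => by
  simpa [heq] using List.isChain_iff_getElem.1 h i hi

theorem exists_crossing_sublist_of_getElem {L : List (α × Bool)} {i₁ i₂ i₃ i₄ : ℕ}
    (h₁₂ : i₁ < i₂) (h₂₃ : i₂ < i₃) (h₃₄ : i₃ < i₄) (h₄ : i₄ < L.length)
    (h₁₃ : L[i₁] = (L[i₃].1, !L[i₃].2)) (h₂₄ : L[i₂] = (L[i₄].1, !L[i₄].2)) :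
    ∃ a b : α × Bool, [(a.1, !a.2), (b.1, !b.2), a, b] <+ L := by
  refine ⟨L[i₃], L[i₄], ?_⟩
  rw [← h₁₃, ← h₂₄]
  refine .trans ?_ (L.drop_sublist i₁)
  exact List.getElem_cons_sublist_drop _ h₁₂ <| List.getElem_cons_sublist_drop _ h₂₃ <|
    List.getElem_cons_sublist_drop _ h₃₄ <|
      List.getElem_cons_sublist_drop h₄ (lt_add_one i₄) (List.nil_sublist _)

theorem exists_crossing_sublist_of_isReduced {L : List (α × Bool)} (hred : IsReduced L)
    (hinv : ∀ q ∈ L, (q.1, !q.2) ∈ L) (hne : L ≠ []) :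
    ∃ a b : α × Bool, [(a.1, !a.2), (b.1, !b.2), a, b] <+ L := by
  suffices key : ∀ n i j (hij : i < j) (hj : j < L.length), j - i = n →
      L[j] = (L[i].1, !L[i].2) → ∃ a b : α × Bool, [(a.1, !a.2), (b.1, !b.2), a, b] <+ L by
    have h₀ : 0 < L.length := List.length_pos_iff.2 hne
    obtain ⟨j, hj, hjq⟩ := List.getElem_of_mem (hinv _ (L.getElem_mem h₀))
    have hj0 : 0 < j := by
      refine Nat.pos_of_ne_zero fun h => ?_
      subst h
      simp [Prod.ext_iff] at hjq
    exact key _ 0 j hj0 hj rfl hjq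
  intro n
  induction n using Nat.strong_induction_on with
  | _ n ih =>
  rintro i j hij hj rfl hji
  have hi₁ : i + 1 < j := by
    refine lt_of_le_of_ne hij fun h => ?_
    subst h
    exact hred.getElem_succ_ne_inv hj hji
  obtain ⟨l, hl, hlc⟩ := List.getElem_of_mem (hinv _ (L.getElem_mem (hi₁.trans hj)))
  rcases lt_trichotomy l i with hli | rfl | hil
  · exact exists_crossing_sublist_of_getElem hli (lt_add_one i) hi₁ hj hlc
      (eq_inv_letter_comm.1 hji)
  · exact absurd (eq_inv_letter_comm.1 hlc) (hred.getElem_succ_ne_inv (hi₁.trans hj))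
  obtain rfl | hil : l = i + 1 ∨ i + 1 < l := by omega
  · simp [Prod.ext_iff] at hlc
  rcases le_or_gt l j with hlj | hjl
  · exact ih (l - (i + 1)) (by omega) (i + 1) l hil hl rfl hlc
  · exact exists_crossing_sublist_of_getElem (lt_add_one i) hi₁ hjl hl
      (eq_inv_letter_comm.1 hji) (eq_inv_letter_comm.1 hlc)

variable [DecidableEq α]

theorem toAdd_lift_mulSingle_mk (x : α) (L : List (α × Bool)) :
    (lift (Pi.mulSingle x (Multiplicative.ofAdd (1 : ℤ))) (mk L)).toAdd =
      L.count (x, true) - L.count (x, false) := by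
  rw [lift_mk]
  induction L with
  | nil => simp
  | cons q L ih =>
    obtain ⟨y, b⟩ := q
    rcases eq_or_ne y x with rfl | hyx
    · cases b <;> simp [ih] <;> ring
    · cases b <;> simp [ih, hyx]

theorem count_toWord_inv_eq_of_mem_commutator {w : FreeGroup α}
    (hw : w ∈ commutator (FreeGroup α)) (q : α × Bool) :
    w.toWord.count (q.1, !q.2) = w.toWord.count q := by
  have hker := Abelianization.commutator_subset_ker
    (lift (Pi.mulSingle q.1 (Multiplicative.ofAdd (1 : ℤ)))) hw
  rw [MonoidHom.mem_ker, ← mk_toWord (x := w)] at hker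
  have := congrArg Multiplicative.toAdd hker
  rw [toAdd_lift_mulSingle_mk, toAdd_one] at this
  obtain ⟨x, _ | _⟩ := q <;> simp only [Bool.not_false, Bool.not_true] at this ⊢ <;> omega

end FreeGroup

theorem stmt_17_general {α : Type*} [DecidableEq α] (w : FreeGroup α)
    (hw : w ∈ commutator (FreeGroup α)) (hne : w ≠ 1) :
    ∃ (W1 W2 W3 W4 W5 : List (α × Bool)) (a b : α × Bool),
      w.toWord = W1 ++ [(a.1, !a.2)] ++ W2 ++ [(b.1, !b.2)] ++ W3 ++ [a] ++ W4 ++ [b] ++ W5 := by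
  have hinv : ∀ q ∈ w.toWord, (q.1, !q.2) ∈ w.toWord := fun q hq => by
    rw [← List.count_pos_iff, FreeGroup.count_toWord_inv_eq_of_mem_commutator hw]
    exact List.count_pos_iff.2 hq
  obtain ⟨a, b, hab⟩ := FreeGroup.exists_crossing_sublist_of_isReduced
    FreeGroup.isReduced_toWord hinv (mt FreeGroup.toWord_eq_nil_iff.1 hne)
  obtain ⟨W1, W2, W3, W4, W5, hW⟩ := List.exists_eq_append_of_sublist_four hab
  exact ⟨W1, W2, W3, W4, W5, a, b, hW⟩

theorem stmt_17 {α : Type*} [Fintype α] [DecidableEq α] (w : FreeGroup α)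
    (hw : w ∈ commutator (FreeGroup α)) (hne : w ≠ 1) :
    ∃ (W1 W2 W3 W4 W5 : List (α × Bool)) (a b : α × Bool),
      w.toWord = W1 ++ [(a.1, !a.2)] ++ W2 ++ [(b.1, !b.2)] ++ W3 ++ [a] ++ W4 ++ [b] ++ W5 :=
  stmt_17_general w hw hne
end

section
/- Let F be a free group and w ∈ [F,F] with cl(w) = l ≥ 1. If w = w₁a⁻¹w₂b⁻¹w₃aw₄bw₅ (any factorization in F, with a, b ∈ F), then cl(w₁w₄w₃w₂w₅) ≥ l − 1. -/
/-!
Moving `a⁻¹ … a` and `b⁻¹ … b` past each other costs a single commutator: the word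
`w₁a⁻¹w₂b⁻¹w₃aw₄bw₅` is `[x, y] · w₁w₄w₃w₂w₅` for suitable `x, y`, and multiplying by one
commutator raises the commutator length by at most one.
-/

section

variable {G : Type*} [Group G]

theorem IsProdOfCommutators.commF_mul {g : G} {n : ℕ} (h : IsProdOfCommutators g n) (x y : G) :
    IsProdOfCommutators (commF x y * g) (n + 1) := by
  obtain ⟨a, b, rfl⟩ := h
  exact ⟨Fin.cons x a, Fin.cons y b, by simp [List.ofFn_succ]⟩

theorem commF_swap_mul_commF_mul (x y g : G) : commF y x * (commF x y * g) = g := by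
  simp only [commF]
  group

/-- If `g` is no product of commutators, then neither is `[x, y] * g`, and both have the junk
value `cl = sInf ∅ = 0`. -/
theorem cl_commF_mul_le (x y g : G) : cl (commF x y * g) ≤ cl g + 1 := by
  by_cases hg : ∃ n, IsProdOfCommutators g n
  · exact Nat.sInf_le (IsProdOfCommutators.commF_mul (Nat.sInf_mem hg) x y)
  · have hempty : {n | IsProdOfCommutators (commF x y * g) n} = ∅ := by
      refine Set.eq_empty_of_forall_notMem fun n hn => hg ⟨n + 1, ?_⟩
      simpa only [commF_swap_mul_commF_mul] using hn.commF_mul y x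
    simp [cl, hempty]

theorem interleaved_eq_commF_mul (w₁ w₂ w₃ w₄ w₅ a b : G) :
    w₁ * a⁻¹ * w₂ * b⁻¹ * w₃ * a * w₄ * b * w₅ =
      commF (w₁ * w₄ * w₃ * a * w₁⁻¹) (w₁ * w₄ * b * w₂⁻¹ * w₃⁻¹ * w₄⁻¹ * w₁⁻¹) *
        (w₁ * w₄ * w₃ * w₂ * w₅) := by
  simp only [commF]
  group

end

theorem stmt_18_general {α : Type*} (w w1 w2 w3 w4 w5 a b : FreeGroup α)
    (l : ℕ) (hl : cl w = l)
    (hfac : w = w1 * a⁻¹ * w2 * b⁻¹ * w3 * a * w4 * b * w5) :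
    l - 1 ≤ cl (w1 * w4 * w3 * w2 * w5) := by
  have h := cl_commF_mul_le (w1 * w4 * w3 * a * w1⁻¹)
    (w1 * w4 * b * w2⁻¹ * w3⁻¹ * w4⁻¹ * w1⁻¹) (w1 * w4 * w3 * w2 * w5)
  rw [← interleaved_eq_commF_mul, ← hfac, hl] at h
  omega

theorem stmt_18 {α : Type*} (w w1 w2 w3 w4 w5 a b : FreeGroup α)
    (hw : w ∈ commutator (FreeGroup α)) (l : ℕ) (hl : cl w = l) (hl1 : 1 ≤ l)
    (hfac : w = w1 * a⁻¹ * w2 * b⁻¹ * w3 * a * w4 * b * w5) :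
    l - 1 ≤ cl (w1 * w4 * w3 * w2 * w5) :=
  stmt_18_general w w1 w2 w3 w4 w5 a b l hl hfac
end
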